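/- Let Σ = (x_0,…,x_k) be a tuple of distinct elements of [n] and σ an ordered set partition of [n] for which level(σ,Σ) is defined. Then level(σ,Σ) ∈ F(σ), level(F(σ,level(σ,Σ)),Σ) is defined, and level(F(σ,level(σ,Σ)),Σ) = level(σ,Σ). Consequently the standard matching M_Σ, defined by M_Σ(σ) := F(σ,level(σ,Σ)), is an involution on the set of ordered set partitions of [n] for which level is defined, and gives a well-defined matching in Γ_n. -/

import Mathlib

open Finset

/-- union of a list of finsets -/
def lunion {α : Type*} [DecidableEq α] (L : List (Finset α)) : Finset α := L.foldr (· ∪ ·) ∅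

/-- `IsOSP A L` : `L` is an ordered set partition of the finite set `A`. -/
def IsOSP {α : Type*} [DecidableEq α] (A : Finset α) (L : List (Finset α)) : Prop :=
  (∀ B ∈ L, B.Nonempty) ∧ L.Pairwise (fun B C => Disjoint B C) ∧ lunion L = A

/-- `seenBlk L x` = `A_1 ∪ … ∪ A_{i(x)}`, the union of the blocks of `L` up to and
including the block containing `x`. -/
def seenBlk {α : Type*} [DecidableEq α] : List (Finset α) → α → Finset α
  | [], _ => ∅
  | A :: rest, x => if x ∈ A then A else A ∪ seenBlk rest x

/-- rank (1-based position in the increasing order) of `x` in the finset `S`. -/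
def rankIn (S : Finset ℕ) (x : ℕ) : ℕ := (S.filter (fun y => y ≤ x)).card

/-- the set `F(σ)` of flippable colors, for an ordered set partition of `[n] = {0,…,n}` -/
def Fset (n : ℕ) (L : List (Finset ℕ)) : Finset ℕ :=
  match L.getLast? with
  | some A => if A.card = 1 then Finset.range (n+1) \ A else Finset.range (n+1)
  | none => Finset.range (n+1)

/-- the flip `F(σ,x)` of an ordered set partition with respect to the color `x` -/
def flipOSP (x : ℕ) : List (Finset ℕ) → List (Finset ℕ)
  | [] => []
  | A :: rest =>
    if x ∈ A then
      if 2 ≤ A.card then {x} :: A.erase x :: rest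
      else
        match rest with
        | [] => [A]
        | B :: rest' => insert x B :: rest'
    else A :: flipOSP x rest

def levelAux : List ℕ → List (Finset ℕ) → Option ℕ
  | [], _ => none
  | _ :: _, [] => none
  | x :: xs, A :: As => if A = {x} then levelAux xs As else some x

/-- `levelFn Σ σ` = `level(σ,Σ)` (as an `Option`; `none` = undefined). -/
def levelFn (Sig : List ℕ) (L : List (Finset ℕ)) : Option ℕ :=
  levelAux Sig.reverse L.reverse

/-- ordered set partitions of `[n] = {0,…,n}` -/
def OSPn (n : ℕ) : Type := {L : List (Finset ℕ) // IsOSP (Finset.range (n+1)) L}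

/-- the graph `Γ_n`: vertices are the ordered set partitions of `[n]`, with `σ` and
`F(σ,x)` joined by an edge for every `x ∈ F(σ)`. -/
def Gamma (n : ℕ) : SimpleGraph (OSPn n) where
  Adj σ τ := σ ≠ τ ∧
    ((∃ x ∈ Fset n σ.1, τ.1 = flipOSP x σ.1) ∨ (∃ x ∈ Fset n τ.1, σ.1 = flipOSP x τ.1))
  symm := ⟨fun σ τ h => ⟨h.1.symm, h.2.symm⟩⟩
  loopless := ⟨fun σ h => h.1 rfl⟩

/-- a matching: a set of edges of `G`, no two of which share a vertex -/
def IsMatchingSet {V : Type*} (G : SimpleGraph V) (M : Set (Sym2 V)) : Prop :=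
  (∀ e ∈ M, e ∈ G.edgeSet) ∧ ∀ e ∈ M, ∀ f ∈ M, ∀ v : V, v ∈ e → v ∈ f → e = f

/-- a vertex is critical w.r.t. `M` if it lies in no edge of `M` -/
def CriticalVx {V : Type*} (M : Set (Sym2 V)) (v : V) : Prop := ∀ e ∈ M, v ∉ e

/-- the standard matching `M_Σ`, as a set of edges of `Γ_n` -/
def MSigma (n : ℕ) (Sig : List ℕ) : Set (Sym2 (OSPn n)) :=
  {e | ∃ σ τ : OSPn n, ∃ x, levelFn Sig σ.1 = some x ∧ τ.1 = flipOSP x σ.1 ∧ e = s(σ, τ)}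

/-- a list of edges is alternating w.r.t. `M` -/
def Alternates {V : Type*} (M : Set (Sym2 V)) (es : List (Sym2 V)) : Prop :=
  es.Chain' (fun e f => e ∈ M ↔ f ∉ M)

def IsProperlyAlternating {V : Type*} {G : SimpleGraph V} (M : Set (Sym2 V)) {u v : V}
    (p : G.Walk u v) : Prop :=
  Alternates M p.edges ∧
  (∀ e, p.edges.head? = some e → e ∉ M → CriticalVx M u) ∧
  (∀ e, p.edges.getLast? = some e → e ∉ M → CriticalVx M v)

def IsSemiAugmenting {V : Type*} {G : SimpleGraph V} (M : Set (Sym2 V)) {u v : V}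
    (p : G.Walk u v) : Prop :=
  IsProperlyAlternating M p ∧
  (∃ e, p.edges.head? = some e ∧ e ∈ M) ∧ (∃ e, p.edges.getLast? = some e ∧ e ∉ M)

def IsNonAugmenting {V : Type*} {G : SimpleGraph V} (M : Set (Sym2 V)) {u v : V}
    (p : G.Walk u v) : Prop :=
  Alternates M p.edges ∧
  (∃ e, p.edges.head? = some e ∧ e ∈ M) ∧ (∃ e, p.edges.getLast? = some e ∧ e ∈ M)

def IsWeaklySemiAugmenting {V : Type*} {G : SimpleGraph V} (M : Set (Sym2 V)) {u v : V}
    (p : G.Walk u v) : Prop :=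
  Alternates M p.edges ∧
  (p.edges = [] ∨
    ((∃ e, p.edges.head? = some e ∧ e ∈ M) ∧ (∃ e, p.edges.getLast? = some e ∧ e ∉ M)))

/-- a partial ordered set partition, as a list of pairs of blocks `(A_i, B_i)` -/
abbrev RawPOSP := List (Finset ℕ × Finset ℕ)

def carrierP (σ : RawPOSP) : Finset ℕ := (σ.map Prod.fst).foldr (· ∪ ·) ∅
def colorsP (σ : RawPOSP) : Finset ℕ := (σ.map Prod.snd).foldr (· ∪ ·) ∅

/-- `σ` is a partial ordered set partition of `[n] = {0,…,n}` -/
def IsPOSP (n : ℕ) (σ : RawPOSP) : Prop :=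
  σ ≠ [] ∧ (∀ p ∈ σ, p.2.Nonempty ∧ p.2 ⊆ p.1 ∧ p.1 ⊆ Finset.range (n+1)) ∧
  (σ.map Prod.fst).Pairwise (fun A B => Disjoint A B)

/-- view an ordered set partition as a partial one, with `B_i = A_i` -/
def toPairs (L : List (Finset ℕ)) : RawPOSP := L.map (fun A => (A, A))

def dlAux (S : Finset ℕ) : Finset ℕ → RawPOSP → RawPOSP
  | _, [] => []
  | acc, (A, B) :: rest =>
    if B ⊆ S then dlAux S (acc ∪ A) rest
    else (acc ∪ A, B \ S) :: dlAux S ∅ rest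

/-- the deletion `dl(σ, S)` -/
def dl (σ : RawPOSP) (S : Finset ℕ) : RawPOSP := dlAux S ∅ σ

/-- `D(σ, S)` = `A_i ∪ … ∪ A_t` for the minimal `i` with `B_i ∪ … ∪ B_t ⊆ S`, else `∅` -/
def Dfun (S : Finset ℕ) : RawPOSP → Finset ℕ
  | [] => ∅
  | b :: rest => if colorsP (b :: rest) ⊆ S then carrierP (b :: rest) else Dfun S rest

def nodesAux : Finset ℕ → RawPOSP → Finset (Finset ℕ × ℕ)
  | _, [] => ∅
  | acc, (A, B) :: rest => B.image (fun x => (acc ∪ A, x)) ∪ nodesAux (acc ∪ A) rest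

/-- the node set `V(σ)` of a partial ordered set partition -/
def nodesP (σ : RawPOSP) : Finset (Finset ℕ × ℕ) := nodesAux ∅ σ

/-- an ordered set partition of the whole of `[n]`, viewed as a partial one -/
def IsFullOSP (n : ℕ) (σ : RawPOSP) : Prop :=
  IsPOSP n σ ∧ carrierP σ = Finset.range (n+1) ∧ ∀ p ∈ σ, p.2 = p.1

/-- simplices of the standard chromatic subdivision `χ(Δⁿ)` -/
def IsSimplexChi (n : ℕ) (W : Finset (Finset ℕ × ℕ)) : Prop :=
  ∃ σ : RawPOSP, IsFullOSP n σ ∧ W ⊆ nodesP σ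

/-- a linked tuple of partial ordered set partitions -/
def Linked (T : List RawPOSP) : Prop := T.Chain' (fun σ τ => colorsP σ = carrierP τ)

/-- vertices of `χ^d(Δⁿ)`: linked `d`-tuples whose last entry has a singleton color set -/
def IsVertexChi (n d : ℕ) (v : List RawPOSP) : Prop :=
  v.length = d ∧ (∀ σ ∈ v, IsPOSP n σ) ∧ Linked v ∧ (colorsP (v.getLastD [])).card = 1

/-- the `n`-simplices of `χ^d(Δⁿ)`: linked `d`-tuples of ordered set partitions of `[n]` -/
def IsTopSimplexChi (n d : ℕ) (T : List RawPOSP) : Prop :=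
  T.length = d ∧ Linked T ∧
  ∀ σ ∈ T, IsPOSP n σ ∧ carrierP σ = Finset.range (n+1) ∧ ∀ p ∈ σ, p.2 = p.1

def faceAux : Finset ℕ → List RawPOSP → List RawPOSP
  | _, [] => []
  | S, σ :: rest => dl σ S :: faceAux (Dfun S σ) rest

/-- the face of the simplex `T` of `χ^d(Δⁿ)` determined by `S_d = S`:
`(dl(σ_1,S_1),…,dl(σ_d,S_d))` with `S_i = D(σ_{i+1},S_{i+1})`. -/
def faceT (T : List RawPOSP) (S : Finset ℕ) : List RawPOSP := (faceAux S T.reverse).reverse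

/-- the vertex of the `n`-simplex `T` colored `x` -/
def vertexOf (T : List RawPOSP) (x : ℕ) : List RawPOSP :=
  faceT T ((colorsP (T.getLastD [])) \ {x})

/-- relabel all elements by `f` -/
def relabel (f : ℕ → ℕ) (T : List RawPOSP) : List RawPOSP :=
  T.map (fun σ => σ.map (fun p => (p.1.image f, p.2.image f)))

/-- the unique order preserving bijection `I → J` (extended by the identity) -/
noncomputable def oMap (I J : Finset ℕ) (h : I.card = J.card) (x : ℕ) : ℕ :=
  if hx : x ∈ I then ((J.orderIsoOfFin h.symm) ((I.orderIsoOfFin rfl).symm ⟨x, hx⟩) : ℕ)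
  else x

/-- a compliant binary labeling of the vertices of `χ^d(Δⁿ)` -/
def Compliant (n d : ℕ) (lab : List RawPOSP → Bool) : Prop :=
  ∀ I J : Finset ℕ, I ⊆ Finset.range (n+1) → J ⊆ Finset.range (n+1) →
    ∀ h : I.card = J.card, ∀ v : List RawPOSP, IsVertexChi n d v →
      carrierP v.headI ⊆ I → lab (relabel (oMap I J h) v) = lab v

/-- the number of ordered set partitions of `[n] = {0,…,n}` -/
noncomputable def fOSP (n : ℕ) : ℕ :=
  Nat.card {L : List (Finset ℕ) // IsOSP (Finset.range (n+1)) L}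

/-- membership in the vertex set of `Γ_n(V)` -/
def InGammaV (V : Finset ℕ) (L : List (Finset ℕ)) : Prop :=
  ∃ A rest, L = A :: rest ∧ ¬ A ⊆ V

/-- a prefix in `V`: a tuple of nonempty pairwise disjoint subsets of `V` -/
def IsPrefixIn {α : Type*} [DecidableEq α] (V : Finset α) (P : List (Finset α)) : Prop :=
  (∀ A ∈ P, A.Nonempty ∧ A ⊆ V) ∧ P.Pairwise (fun A B => Disjoint A B)

/-- membership in the vertex set of `Γ_n(V,𝒜)` -/
def InGammaVA (V : Finset ℕ) (P : List (Finset ℕ)) (L : List (Finset ℕ)) : Prop :=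
  ∃ A rest, L = P ++ A :: rest ∧ ¬ A ⊆ V

/-- conducting bipartite graph of the first type -/
def ConductingFirst {V : Type*} (G : SimpleGraph V) (A B : Set V) : Prop :=
  A.ncard = B.ncard + 1 ∧
  ∀ v ∈ A, ∃ M : Set (Sym2 V), IsMatchingSet G M ∧ ∀ u, CriticalVx M u ↔ u = v

/-- conducting bipartite graph of the second type -/
def ConductingSecond {V : Type*} (G : SimpleGraph V) (A B : Set V) : Prop :=
  A.ncard = B.ncard ∧
  ∀ v ∈ A, ∀ w ∈ B, ∃ M : Set (Sym2 V), IsMatchingSet G M ∧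
    ∀ u, CriticalVx M u ↔ (u = v ∨ u = w)

/-- the vertex of the `n`-simplex `(As ‖ Bs)` of `χ²(Δⁿ)` colored `x` is internal -/
def InternalVx (n : ℕ) (As Bs : List (Finset ℕ)) (x : ℕ) : Prop :=
  carrierP (dl (toPairs As) (Finset.range (n+1) \ seenBlk Bs x)) = Finset.range (n+1)

/-!
Read from the right, `level(σ,Σ) = x` says that `σ = M ++ B :: [{x_{m+1}},…,{x_k}]` with
`B ≠ {x}`, where `x = x_m`. The flip at `x` either splits the block of `x` into `{x}` and the
rest, or merges a singleton block `{x}` into the next block. Either way nothing right of `B`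
changes, and the block left in the place of `B` still differs from `{x}`, so the level is
unchanged. Splitting at `x` and merging at `x` undo each other, so `σ ↦ F(σ, level(σ,Σ))` is an
involution without fixed points, and its graph is a matching in `Γ_n`.
-/

section lunion

variable {α : Type*} [DecidableEq α]

@[simp] lemma lunion_nil : lunion ([] : List (Finset α)) = ∅ := rfl

@[simp] lemma lunion_cons (A : Finset α) (L : List (Finset α)) :
    lunion (A :: L) = A ∪ lunion L := rfl

lemma lunion_append (M N : List (Finset α)) : lunion (M ++ N) = lunion M ∪ lunion N := by
  induction M with
  | nil => simp
  | cons A M ih => simp [ih, union_assoc]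

lemma mem_lunion {x : α} {L : List (Finset α)} : x ∈ lunion L ↔ ∃ B ∈ L, x ∈ B := by
  induction L with
  | nil => simp
  | cons A L ih => simp [ih]

lemma disjoint_lunion_right {C : Finset α} {L : List (Finset α)} :
    Disjoint C (lunion L) ↔ ∀ B ∈ L, Disjoint C B := by
  induction L with
  | nil => simp
  | cons A L ih => simp [ih]

lemma isOSP_cons_iff {A B : Finset α} {L : List (Finset α)} :
    IsOSP A (B :: L) ↔
      B.Nonempty ∧ Disjoint B (lunion L) ∧ IsOSP (lunion L) L ∧ A = B ∪ lunion L := by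
  simp only [IsOSP, List.mem_cons, forall_eq_or_imp, List.pairwise_cons,
    disjoint_lunion_right, lunion_cons]
  tauto

end lunion

lemma insert_ne_singleton_of_notMem {x : ℕ} {D : Finset ℕ} (hD : D.Nonempty) (hxD : x ∉ D) :
    insert x D ≠ {x} := by
  obtain ⟨y, hy⟩ := hD
  intro h
  have hyx : y = x := mem_singleton.1 (h ▸ mem_insert_of_mem hy)
  exact hxD (hyx ▸ hy)

section flip

variable {x : ℕ} {A B : Finset ℕ} {L : List (Finset ℕ)}

lemma flipOSP_cons_of_notMem (hx : x ∉ B) : flipOSP x (B :: L) = B :: flipOSP x L := by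
  simp [flipOSP, hx]

lemma flipOSP_cons_of_ne (hx : x ∈ B) (hB : B ≠ {x}) :
    flipOSP x (B :: L) = {x} :: B.erase x :: L := by
  have : 2 ≤ B.card := one_lt_card_iff_nontrivial.2 ((nontrivial_iff_ne_singleton hx).2 hB)
  simp [flipOSP, hx, this]

lemma flipOSP_singleton_cons (D : Finset ℕ) (L : List (Finset ℕ)) :
    flipOSP x ({x} :: D :: L) = insert x D :: L := by
  simp [flipOSP]

lemma flipOSP_singleton : flipOSP x [{x}] = [{x}] := by
  simp [flipOSP]

lemma isOSP_flipOSP (hL : IsOSP A L) : IsOSP A (flipOSP x L) := by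
  induction L generalizing A with
  | nil => exact hL
  | cons B L ih =>
    obtain ⟨hB, hBL, hLt, rfl⟩ := isOSP_cons_iff.1 hL
    by_cases hxB : x ∈ B
    · by_cases hBx : B = {x}
      · subst hBx
        cases L with
        | nil => rwa [flipOSP_singleton]
        | cons D L =>
          obtain ⟨-, hDL, hL', -⟩ := isOSP_cons_iff.1 hLt
          have hxL : x ∉ lunion L := fun h =>
            disjoint_left.1 hBL (mem_singleton_self x) (by simp [h])
          rw [flipOSP_singleton_cons]
          refine isOSP_cons_iff.2 ⟨insert_nonempty x D, ?_, hL', ?_⟩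
          · rw [insert_eq, disjoint_union_left]
            exact ⟨disjoint_singleton_left.2 hxL, hDL⟩
          · rw [lunion_cons, insert_eq, union_assoc]
      · rw [flipOSP_cons_of_ne hxB hBx]
        have hxL : x ∉ lunion L := disjoint_left.1 hBL hxB
        have hE : (B.erase x).Nonempty := ((nontrivial_iff_ne_singleton hxB).2 hBx).erase_nonempty
        refine isOSP_cons_iff.2 ⟨singleton_nonempty x, ?_, ?_, ?_⟩
        · simp [hxL]
        · exact isOSP_cons_iff.2 ⟨hE, disjoint_of_subset_left (erase_subset x B) hBL, hLt, rfl⟩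
        · rw [lunion_cons, ← union_assoc, ← insert_eq, insert_erase hxB]
    · rw [flipOSP_cons_of_notMem hxB]
      have hF := ih hLt
      have hU : lunion (flipOSP x L) = lunion L := hF.2.2
      exact isOSP_cons_iff.2 ⟨hB, hU ▸ hBL, hU ▸ hF, by rw [hU]⟩

lemma flipOSP_flipOSP (hL : IsOSP A L) : flipOSP x (flipOSP x L) = L := by
  induction L generalizing A with
  | nil => rfl
  | cons B L ih =>
    obtain ⟨-, hBL, hLt, -⟩ := isOSP_cons_iff.1 hL
    by_cases hxB : x ∈ B
    · by_cases hBx : B = {x}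
      · subst hBx
        cases L with
        | nil => rw [flipOSP_singleton, flipOSP_singleton]
        | cons D L =>
          obtain ⟨hD, -, -, -⟩ := isOSP_cons_iff.1 hLt
          have hxD : x ∉ D := fun h => disjoint_left.1 hBL (mem_singleton_self x) (by simp [h])
          rw [flipOSP_singleton_cons, flipOSP_cons_of_ne (mem_insert_self x D)
            (insert_ne_singleton_of_notMem hD hxD), erase_insert hxD]
      · rw [flipOSP_cons_of_ne hxB hBx, flipOSP_singleton_cons, insert_erase hxB]
    · rw [flipOSP_cons_of_notMem hxB, flipOSP_cons_of_notMem hxB, ih hLt]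

lemma flipOSP_ne_self (hL : IsOSP A L) (hx : x ∈ A) (hlast : L.getLast? ≠ some {x}) :
    flipOSP x L ≠ L := by
  induction L generalizing A with
  | nil => simp [hL.2.2.symm] at hx
  | cons B L ih =>
    obtain ⟨-, hBL, hLt, rfl⟩ := isOSP_cons_iff.1 hL
    by_cases hxB : x ∈ B
    · by_cases hBx : B = {x}
      · subst hBx
        cases L with
        | nil => simp at hlast
        | cons D L =>
          obtain ⟨hD, -, -, -⟩ := isOSP_cons_iff.1 hLt
          have hxD : x ∉ D := fun h => disjoint_left.1 hBL (mem_singleton_self x) (by simp [h])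
          rw [flipOSP_singleton_cons]
          simp [insert_ne_singleton_of_notMem hD hxD]
      · rw [flipOSP_cons_of_ne hxB hBx]
        simp [Ne.symm hBx]
    · have hxL : x ∈ lunion L := by simpa [hxB] using hx
      cases L with
      | nil => simp at hxL
      | cons D L =>
        rw [flipOSP_cons_of_notMem hxB]
        exact fun h => ih hLt hxL (by rwa [List.getLast?_cons_cons] at hlast) (List.cons.inj h).2

end flip

lemma mem_Fset_iff {n x : ℕ} {L : List (Finset ℕ)} :
    x ∈ Fset n L ↔ x ∈ range (n + 1) ∧ L.getLast? ≠ some {x} := by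
  unfold Fset
  split
  next A hA =>
    rw [hA]
    split_ifs with h1
    · obtain ⟨a, rfl⟩ := card_eq_one.1 h1
      simp [eq_comm]
    · refine ⟨fun h => ⟨h, fun h' => h1 ?_⟩, And.left⟩
      rw [Option.some.inj h']
      exact card_singleton x
  next hA => simp [hA]

lemma levelAux_eq_some_iff {s : List ℕ} {l : List (Finset ℕ)} {x : ℕ} :
    levelAux s l = some x ↔ ∃ s₁ s₂ B l₂, s = s₁ ++ x :: s₂ ∧
      l = s₁.map (fun y => {y}) ++ B :: l₂ ∧ B ≠ {x} := by
  induction s generalizing l with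
  | nil => simp [levelAux]
  | cons z s ih =>
    cases l with
    | nil => simp [levelAux]
    | cons A l =>
      by_cases hA : A = {z}
      · rw [levelAux, if_pos hA, ih]
        constructor
        · rintro ⟨s₁, s₂, B, l₂, rfl, rfl, hB⟩
          exact ⟨z :: s₁, s₂, B, l₂, rfl, by simp [hA], hB⟩
        · rintro ⟨_ | ⟨y, s₁⟩, s₂, B, l₂, hs, hl, hB⟩
          · simp only [List.nil_append, List.cons.injEq, List.map_nil] at hs hl
            exact absurd (hl.1 ▸ hs.1 ▸ hA) hB
          · simp only [List.cons_append, List.cons.injEq, List.map_cons] at hs hl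
            exact ⟨s₁, s₂, B, l₂, hs.2, hl.2, hB⟩
      · rw [levelAux, if_neg hA, Option.some.injEq]
        constructor
        · rintro rfl
          exact ⟨[], s, A, l, rfl, rfl, hA⟩
        · rintro ⟨_ | ⟨y, s₁⟩, s₂, B, l₂, hs, hl, hB⟩
          · simp only [List.nil_append, List.cons.injEq] at hs
            exact hs.1
          · simp only [List.cons_append, List.cons.injEq, List.map_cons] at hs hl
            exact absurd (hs.1 ▸ hl.1) hA

lemma levelFn_eq_some_iff {Sig : List ℕ} {L : List (Finset ℕ)} {x : ℕ} :
    levelFn Sig L = some x ↔ ∃ u t M B, Sig = u ++ x :: t ∧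
      L = M ++ B :: t.map (fun y => {y}) ∧ B ≠ {x} := by
  rw [levelFn, levelAux_eq_some_iff]
  constructor
  · rintro ⟨s₁, s₂, B, l₂, hs, hl, hB⟩
    refine ⟨s₂.reverse, s₁.reverse, l₂.reverse, B, ?_, ?_, hB⟩
    · rw [← List.reverse_reverse Sig, hs]
      simp
    · rw [← List.reverse_reverse L, hl]
      simp [List.map_reverse]
  · rintro ⟨u, t, M, B, rfl, rfl, hB⟩
    exact ⟨t.reverse, u.reverse, B, M.reverse, by simp, by simp [List.map_reverse], hB⟩

section level

variable {Sig : List ℕ} {L : List (Finset ℕ)} {x : ℕ}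

lemma mem_of_levelFn_eq_some (h : levelFn Sig L = some x) : x ∈ Sig := by
  obtain ⟨u, t, -, -, rfl, -, -⟩ := levelFn_eq_some_iff.1 h
  simp

lemma getLast?_ne_of_levelFn_eq_some (hnd : Sig.Nodup) (h : levelFn Sig L = some x) :
    L.getLast? ≠ some {x} := by
  obtain ⟨u, t, M, B, rfl, rfl, hB⟩ := levelFn_eq_some_iff.1 h
  have hxt : x ∉ t := (List.nodup_cons.1 (List.nodup_append.1 hnd).2.1).1
  rw [List.getLast?_append_of_ne_nil _ (List.cons_ne_nil _ _)]
  intro hlast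
  rcases List.mem_cons.1 (List.mem_of_getLast? hlast) with h | h
  · exact hB h.symm
  · obtain ⟨y, hy, hyx⟩ := List.mem_map.1 h
    exact hxt (singleton_inj.1 hyx ▸ hy)

lemma exists_flipOSP_append_cons {B : Finset ℕ} (T : List (Finset ℕ)) (hB : B.Nonempty)
    (hBx : B ≠ {x}) :
    ∀ {N : List (Finset ℕ)}, (x ∈ lunion N ↔ x ∉ B) →
      ∃ N' B', flipOSP x (N ++ B :: T) = N' ++ B' :: T ∧ B' ≠ {x}
  | [], hN => by
    have hxB : x ∈ B := by simpa using hN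
    refine ⟨[{x}], B.erase x, by rw [List.nil_append, flipOSP_cons_of_ne hxB hBx]; rfl, ?_⟩
    exact fun h => notMem_erase x B (h ▸ mem_singleton_self x)
  | A :: N, hN => by
    by_cases hxA : x ∈ A
    · have hxB : x ∉ B := hN.1 (by simp [hxA])
      by_cases hAx : A = {x}
      · subst hAx
        cases N with
        | nil => exact ⟨[], insert x B, flipOSP_singleton_cons B T,
            insert_ne_singleton_of_notMem hB hxB⟩
        | cons D N => exact ⟨insert x D :: N, B, flipOSP_singleton_cons D _, hBx⟩
      · exact ⟨{x} :: A.erase x :: N, B, flipOSP_cons_of_ne hxA hAx, hBx⟩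
    · obtain ⟨N', B', hflip, hB'⟩ :=
        exists_flipOSP_append_cons T hB hBx (by simpa [hxA] using hN)
      exact ⟨A :: N', B', by rw [List.cons_append, flipOSP_cons_of_notMem hxA, hflip]; rfl, hB'⟩

lemma levelFn_flipOSP {A : Finset ℕ} (hnd : Sig.Nodup) (hL : IsOSP A L) (hxA : x ∈ A)
    (h : levelFn Sig L = some x) : levelFn Sig (flipOSP x L) = some x := by
  obtain ⟨u, t, M, B, rfl, rfl, hB⟩ := levelFn_eq_some_iff.1 h
  have hxt : x ∉ t := (List.nodup_cons.1 (List.nodup_append.1 hnd).2.1).1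
  have hxT : x ∉ lunion (t.map fun y => {y}) := by simpa [mem_lunion] using hxt
  have hMB : Disjoint (lunion M) B := by
    rw [disjoint_comm, disjoint_lunion_right]
    exact fun C hC => ((List.pairwise_append.1 hL.2.1).2.2 C hC B (by simp)).symm
  have hx : x ∈ lunion M ∪ (B ∪ lunion (t.map fun y => {y})) := by
    rwa [← lunion_cons, ← lunion_append, hL.2.2]
  obtain ⟨N', B', hflip, hB'⟩ := exists_flipOSP_append_cons (t.map fun y => {y})
    (hL.1 B (by simp)) hB (N := M)
    ⟨fun h => disjoint_left.1 hMB h, fun hxB => by simpa [hxB, hxT] using hx⟩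
  rw [hflip]
  exact levelFn_eq_some_iff.2 ⟨u, t, N', B', rfl, rfl, hB'⟩

end level

lemma exists_of_mem_MSigma {n : ℕ} {Sig : List ℕ} (hnd : Sig.Nodup)
    (hsub : ∀ y ∈ Sig, y ∈ range (n + 1)) {e : Sym2 (OSPn n)} (he : e ∈ MSigma n Sig)
    {v : OSPn n} (hv : v ∈ e) :
    ∃ x, levelFn Sig v.1 = some x ∧ ∃ w : OSPn n, w.1 = flipOSP x v.1 ∧ e = s(v, w) := by
  obtain ⟨σ, τ, x, hx, hτ, rfl⟩ := he
  rcases Sym2.mem_iff.1 hv with rfl | rfl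
  · exact ⟨x, hx, τ, hτ, rfl⟩
  · refine ⟨x, hτ ▸ levelFn_flipOSP hnd σ.2 (hsub x (mem_of_levelFn_eq_some hx)) hx, σ, ?_,
      Sym2.eq_swap⟩
    rw [hτ, flipOSP_flipOSP σ.2]

/-- If `level(σ,Σ)` is defined then it lies in `F(σ)`, `level` is preserved by the
corresponding flip, and the flip is an involution; consequently the standard matching
`M_Σ` is a well-defined matching in `Γ_n`. -/
theorem statement10 (n : ℕ) (Sig : List ℕ) (hnd : Sig.Nodup)
    (hsub : ∀ y ∈ Sig, y ∈ Finset.range (n + 1)) :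
    (∀ (σ : OSPn n) (x : ℕ), levelFn Sig σ.1 = some x →
      x ∈ Fset n σ.1 ∧
      IsOSP (Finset.range (n + 1)) (flipOSP x σ.1) ∧
      levelFn Sig (flipOSP x σ.1) = some x ∧
      flipOSP x (flipOSP x σ.1) = σ.1) ∧
    IsMatchingSet (Gamma n) (MSigma n Sig) := by
  have hrange {L : List (Finset ℕ)} {x : ℕ} (h : levelFn Sig L = some x) : x ∈ range (n + 1) :=
    hsub x (mem_of_levelFn_eq_some h)
  have hF (σ : OSPn n) {x : ℕ} (h : levelFn Sig σ.1 = some x) : x ∈ Fset n σ.1 :=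
    mem_Fset_iff.2 ⟨hrange h, getLast?_ne_of_levelFn_eq_some hnd h⟩
  refine ⟨fun σ x h => ⟨hF σ h, isOSP_flipOSP σ.2, levelFn_flipOSP hnd σ.2 (hrange h) h,
    flipOSP_flipOSP σ.2⟩, fun e he => ?_, fun e he f hf v hve hvf => ?_⟩
  · obtain ⟨σ, τ, x, h, hτ, rfl⟩ := he
    refine ⟨fun hστ => ?_, Or.inl ⟨x, hF σ h, hτ⟩⟩
    exact flipOSP_ne_self σ.2 (hrange h) (getLast?_ne_of_levelFn_eq_some hnd h)
      (hτ.symm.trans (congrArg Subtype.val hστ).symm)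
  · obtain ⟨x, hx, w, hw, rfl⟩ := exists_of_mem_MSigma hnd hsub he hve
    obtain ⟨y, hy, w', hw', rfl⟩ := exists_of_mem_MSigma hnd hsub hf hvf
    obtain rfl : x = y := Option.some.inj (hx.symm.trans hy)
    rw [Subtype.ext (hw.trans hw'.symm)]
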